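/- Every Farey triple q̄ different from {1, 0, ∞} can be mutated in exactly one direction so that the sum of complexities decreases: there is exactly one element p ∈ q̄ such that the sum of the complexities of the elements of μ_p(q̄) is strictly smaller than the sum of the complexities of the elements of q̄. -/

import Mathlib

/-- `ℚ∞ = ℚ ∪ {∞}`, ordered with `∞ = ⊤` as the greatest element. -/
abbrev QInf : Type := WithTop ℚ

/-- The numerator `d(q)` of the reduced representation `q = d(q)/r(q)`; `d(∞) = 1`. -/
def fnum : QInf → ℤ := WithTop.recTopCoe 1 (fun q => q.num)

/-- The denominator `r(q)` of the reduced representation `q = d(q)/r(q)`; `r(∞) = 0`. -/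
def fden : QInf → ℤ := WithTop.recTopCoe 0 (fun q => (q.den : ℤ))

/-- The element of `ℚ∞` represented by the fraction `a / b`: it is `∞` if `b = 0`,
and otherwise the rational number `a / b` (normalized so that the denominator is
positive and the fraction is in lowest terms). -/
def fmk (a b : ℤ) : QInf := if b = 0 then (⊤ : QInf) else (((a : ℚ) / (b : ℚ)) : ℚ)

/-- The Farey distance `Δ(p,q) = |d(p)r(q) - d(q)r(p)|`. -/
def fdist (p q : QInf) : ℤ := |fnum p * fden q - fnum q * fden p|

/-- `p` and `q` are Farey neighbours if `Δ(p,q) = 1`. -/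
def FareyNbr (p q : QInf) : Prop := fdist p q = 1

/-- The Farey sum `p ⊕ q = (d(p) + d(q)) / (r(p) + r(q))`. -/
def fsum (p q : QInf) : QInf := fmk (fnum p + fnum q) (fden p + fden q)

/-- The Farey difference `p ⊖ q = (d(p) - d(q)) / (r(p) - r(q))`. -/
def fdiff (p q : QInf) : QInf := fmk (fnum p - fnum q) (fden p - fden q)

/-- A Farey triple: a three-element subset of `ℚ∞` whose elements are pairwise
Farey neighbours. -/
def IsFareyTriple (s : Set QInf) : Prop := s.ncard = 3 ∧ s.Pairwise FareyNbr

/-- The element replacing `p` in the mutation of the Farey triple `{p, q, r}` in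
direction `p`: it is `q ⊖ r` if `p` lies strictly between `q` and `r`, and `q ⊕ r`
otherwise. -/
def fareyMutEl (p q r : QInf) : QInf :=
  if (q < p ∧ p < r) ∨ (r < p ∧ p < q) then fdiff q r else fsum q r

/-- The mutation of the Farey triple `{p, q, r}` in direction `p`. -/
def fareyMut (p q r : QInf) : Set QInf := {fareyMutEl p q r, q, r}

/-- The complexity `c(q) = |d(q)| + r(q) + |d(q) - r(q)|`. -/
def complexity (x : QInf) : ℤ := |fnum x| + fden x + |fnum x - fden x|


/-! Identify `x ∈ ℚ∞` with its reduced vector `(d(x), r(x)) ∈ ℤ²`. The complexity is then the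
hexagonal norm `‖(a, b)‖ = |a| + |b| + |a - b|` of that vector, Farey neighbours are unimodular
pairs, and in a Farey triple one vector is the sum `y + z` of the other two. The three mutations
replace `y + z` by `y - z`, `y` by `y + 2z` and `z` by `2y + z`; that at most one of them lowers the
norm is a piecewise linear inequality. At least one does: if `y` and `z` have positive second
coordinates, they lie in one of the cones `a ≤ 0`, `0 ≤ a ≤ b`, `b ≤ a` on which the norm is
additive, so `‖y - z‖ < ‖y‖ + ‖z‖ = ‖y + z‖`; otherwise `{y, z} = {(1, 0), (c, 1)}` and the sign of
`c` decides, `c = 0` giving the triple `{1, 0, ∞}`. -/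

def ExactlyOne (P Q R : Prop) : Prop := (P ∧ ¬Q ∧ ¬R) ∨ (¬P ∧ Q ∧ ¬R) ∨ (¬P ∧ ¬Q ∧ R)

theorem ExactlyOne.of_or_of_not_and {P Q R : Prop} (h : P ∨ Q ∨ R) (hPQ : ¬(P ∧ Q))
    (hPR : ¬(P ∧ R)) (hQR : ¬(Q ∧ R)) : ExactlyOne P Q R := by
  unfold ExactlyOne
  tauto

theorem isCoprime_of_isUnit_mul_sub_mul {R : Type*} [CommRing R] {a b c d : R}
    (h : IsUnit (a * d - c * b)) : IsCoprime a b := by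
  obtain ⟨v, hv⟩ := h.exists_right_inv
  exact ⟨d * v, -c * v, by linear_combination hv⟩

section HexNorm

def hexNorm (a b : ℤ) : ℤ := |a| + |b| + |a - b|

theorem hexNorm_neg (a b : ℤ) : hexNorm (-a) (-b) = hexNorm a b := by
  rw [hexNorm, hexNorm, ← abs_neg (-a - -b), neg_sub_neg, neg_sub, abs_neg, abs_neg]

variable {a b c d : ℤ}

theorem same_sign_of_isUnit_mul_sub_mul (hb : 0 < b) (hd : 0 < d) (h : IsUnit (a * d - c * b)) :
    (0 ≤ a ∧ 0 ≤ c) ∨ (a ≤ 0 ∧ c ≤ 0) := by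
  by_contra! hs
  have h := Int.isUnit_iff.mp h
  rcases lt_or_ge a 0 with ha | ha
  · have hc := hs.2 ha.le
    have : a * d - c * b ≤ -(b + d) := by nlinarith
    omega
  · have hc := hs.1 ha
    have ha : 0 < a := by omega
    have : b + d ≤ a * d - c * b := by nlinarith
    omega

theorem hexNorm_sub_lt_add (hb : 0 < b) (hd : 0 < d) (h : IsUnit (a * d - c * b)) :
    hexNorm (a - c) (b - d) < hexNorm (a + c) (b + d) := by
  have hac := same_sign_of_isUnit_mul_sub_mul hb hd h
  have hac' := same_sign_of_isUnit_mul_sub_mul (a := a - b) (c := c - d) hb hd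
    (by convert h using 1; ring)
  calc hexNorm (a - c) (b - d) < hexNorm a b + hexNorm c d := by
        simp only [hexNorm, Int.abs_eq_natAbs]; omega
    _ = hexNorm (a + c) (b + d) := by simp only [hexNorm, Int.abs_eq_natAbs]; omega

theorem hexNorm_mutation_decreases (hb : 0 ≤ b) (hd : 0 ≤ d) (hb0 : b = 0 → a = 1)
    (hd0 : d = 0 → c = 1) (h : IsUnit (a * d - c * b)) (hbase : ¬(a = 1 ∧ b = 0 ∧ c = 0 ∧ d = 1))
    (hbase' : ¬(c = 1 ∧ d = 0 ∧ a = 0 ∧ b = 1)) :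
    hexNorm (a - c) (b - d) < hexNorm (a + c) (b + d) ∨
      hexNorm (a + 2 * c) (b + 2 * d) < hexNorm a b ∨
      hexNorm (c + 2 * a) (d + 2 * b) < hexNorm c d := by
  rcases hb.eq_or_lt with rfl | hb
  · obtain rfl := hb0 rfl
    obtain rfl : d = 1 := by rcases Int.isUnit_iff.mp h with h | h <;> omega
    simp only [hexNorm, Int.abs_eq_natAbs]
    omega
  rcases hd.eq_or_lt with rfl | hd
  · obtain rfl := hd0 rfl
    obtain rfl : b = 1 := by rcases Int.isUnit_iff.mp h with h | h <;> omega
    simp only [hexNorm, Int.abs_eq_natAbs]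
    omega
  exact Or.inl (hexNorm_sub_lt_add hb hd h)

theorem exactlyOne_hexNorm_mutation_decreases (hb : 0 ≤ b) (hd : 0 ≤ d) (hb0 : b = 0 → a = 1)
    (hd0 : d = 0 → c = 1) (h : IsUnit (a * d - c * b))
    (hbase : ¬(a = 1 ∧ b = 0 ∧ c = 0 ∧ d = 1)) (hbase' : ¬(c = 1 ∧ d = 0 ∧ a = 0 ∧ b = 1)) :
    ExactlyOne (hexNorm (a - c) (b - d) < hexNorm (a + c) (b + d))
      (hexNorm (a + 2 * c) (b + 2 * d) < hexNorm a b)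
      (hexNorm (c + 2 * a) (d + 2 * b) < hexNorm c d) := by
  refine .of_or_of_not_and (hexNorm_mutation_decreases hb hd hb0 hd0 h hbase hbase') ?_ ?_ ?_ <;>
    simp only [hexNorm, Int.abs_eq_natAbs] <;> omega

end HexNorm

theorem fden_nonneg (x : QInf) : 0 ≤ fden x := by
  induction x using WithTop.recTopCoe with
  | top => exact le_rfl
  | coe q => exact Int.natCast_nonneg q.den

theorem eq_top_of_fden_eq_zero {x : QInf} (h : fden x = 0) : x = ⊤ := by
  induction x using WithTop.recTopCoe with
  | top => rfl
  | coe q => exact absurd h (Int.natCast_ne_zero.mpr q.den_nz)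

theorem fnum_eq_one_of_fden_eq_zero {x : QInf} (h : fden x = 0) : fnum x = 1 := by
  rw [eq_top_of_fden_eq_zero h]
  rfl

theorem QInf.ext {x y : QInf} (hn : fnum x = fnum y) (hd : fden x = fden y) : x = y := by
  induction x using WithTop.recTopCoe with
  | top => exact (eq_top_of_fden_eq_zero hd.symm).symm
  | coe q =>
    induction y using WithTop.recTopCoe with
    | top => exact absurd (eq_top_of_fden_eq_zero hd) WithTop.coe_ne_top
    | coe s => exact congrArg _ (Rat.ext hn (Int.ofNat_inj.mp hd))

theorem lt_iff_fnum_mul_fden_lt (x y : QInf) : x < y ↔ fnum x * fden y < fnum y * fden x := by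
  induction x using WithTop.recTopCoe with
  | top =>
    induction y using WithTop.recTopCoe with
    | top => simp
    | coe s => simp [fnum, fden]
  | coe q =>
    induction y using WithTop.recTopCoe with
    | top => simp [fnum, fden, q.pos]
    | coe s => exact WithTop.coe_lt_coe.trans (Rat.lt_iff q s)

theorem complexity_eq_hexNorm (x : QInf) : complexity x = hexNorm (fnum x) (fden x) := by
  rw [complexity, hexNorm, abs_of_nonneg (fden_nonneg x)]

theorem fmk_neg_neg (a b : ℤ) : fmk (-a) (-b) = fmk a b := by
  unfold fmk
  rcases eq_or_ne b 0 with rfl | hb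
  · simp
  · rw [if_neg hb, if_neg (neg_ne_zero.mpr hb), Int.cast_neg, Int.cast_neg, neg_div_neg_eq]

theorem fdiff_comm (p q : QInf) : fdiff p q = fdiff q p := by
  rw [fdiff, fdiff, ← fmk_neg_neg, neg_sub, neg_sub]

theorem fsum_comm (p q : QInf) : fsum p q = fsum q p := by
  rw [fsum, fsum, add_comm (fnum p), add_comm (fden p)]

theorem fareyMutEl_comm (p q r : QInf) : fareyMutEl p q r = fareyMutEl p r q := by
  unfold fareyMutEl
  by_cases h : (q < p ∧ p < r) ∨ (r < p ∧ p < q)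
  · rw [if_pos h, if_pos h.symm, fdiff_comm]
  · rw [if_neg h, if_neg (mt Or.symm h), fsum_comm]

theorem complexity_fmk_of_pos {a b : ℤ} (h : IsCoprime a b) (hb : 0 < b) :
    complexity (fmk a b) = hexNorm a b := by
  have h : a.natAbs.Coprime b.natAbs := Int.isCoprime_iff_gcd_eq_one.mp h
  rw [complexity, fmk, if_neg hb.ne', hexNorm, abs_of_pos hb, fnum, fden]
  simp [Rat.num_div_eq_of_coprime hb h, Rat.den_div_eq_of_coprime hb h]

theorem complexity_fmk {a b : ℤ} (h : IsCoprime a b) : complexity (fmk a b) = hexNorm a b := by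
  rcases lt_trichotomy b 0 with hb | rfl | hb
  · rw [← fmk_neg_neg, ← hexNorm_neg a b]
    exact complexity_fmk_of_pos h.neg_neg (neg_pos.mpr hb)
  · obtain ⟨u, rfl⟩ := isCoprime_zero_right.mp h
    rcases Int.units_eq_one_or u with rfl | rfl <;> rfl
  · exact complexity_fmk_of_pos h hb

def fdet (p q : QInf) : ℤ := fnum p * fden q - fnum q * fden p

theorem FareyNbr.isUnit_fdet {p q : QInf} (h : FareyNbr p q) : IsUnit (fdet p q) :=
  Int.isUnit_iff_abs_eq.mpr h

theorem FareyNbr.symm {p q : QInf} (h : FareyNbr p q) : FareyNbr q p := by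
  rwa [FareyNbr, fdist, abs_sub_comm]

theorem FareyNbr.fdet_eq {p q : QInf} (h : FareyNbr p q) : fdet p q = 1 ∨ fdet p q = -1 :=
  Int.isUnit_iff.mp h.isUnit_fdet

section Mediant

variable {x y z : QInf}

def IsMediant (x y z : QInf) : Prop := fnum x = fnum y + fnum z ∧ fden x = fden y + fden z

theorem IsMediant.symm (hx : IsMediant x y z) : IsMediant x z y :=
  ⟨hx.1.trans (add_comm _ _), hx.2.trans (add_comm _ _)⟩

theorem isMediant_cases {p q r : QInf} (h1 : FareyNbr p q) (h2 : FareyNbr p r)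
    (h3 : FareyNbr q r) : IsMediant p q r ∨ IsMediant q p r ∨ IsMediant r p q := by
  -- Cramer's rule. The sign pattern `p + q + r = 0` is impossible: it would make all three
  -- denominators `0` and all numerators `1`.
  have hn : fdet q r * fnum p = fdet p r * fnum q - fdet p q * fnum r := by unfold fdet; ring
  have hd : fdet q r * fden p = fdet p r * fden q - fdet p q * fden r := by unfold fdet; ring
  have := fden_nonneg p; have := fden_nonneg q; have := fden_nonneg r
  have := @fnum_eq_one_of_fden_eq_zero p
  have := @fnum_eq_one_of_fden_eq_zero q
  have := @fnum_eq_one_of_fden_eq_zero r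
  unfold IsMediant
  rcases h1.fdet_eq with h1 | h1 <;> rcases h2.fdet_eq with h2 | h2 <;>
    rcases h3.fdet_eq with h3 | h3 <;> rw [h1, h2, h3] at hn hd <;> omega

theorem IsMediant.between (hx : IsMediant x y z) (hyz : FareyNbr y z) :
    (y < x ∧ x < z) ∨ (z < x ∧ x < y) := by
  simp only [lt_iff_fnum_mul_fden_lt, hx.1, hx.2]
  rcases hyz.fdet_eq with h | h <;> unfold fdet at h
  · exact Or.inr ⟨by linarith, by linarith⟩
  · exact Or.inl ⟨by linarith, by linarith⟩

theorem IsMediant.fareyMutEl_self (hx : IsMediant x y z) (hyz : FareyNbr y z) :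
    fareyMutEl x y z = fmk (fnum y - fnum z) (fden y - fden z) := by
  rw [fareyMutEl, if_pos (hx.between hyz), fdiff]

theorem IsMediant.fareyMutEl_left (hx : IsMediant x y z) (hyz : FareyNbr y z) :
    fareyMutEl y x z = fmk (fnum y + 2 * fnum z) (fden y + 2 * fden z) := by
  have hy : ¬((x < y ∧ y < z) ∨ (z < y ∧ y < x)) := by
    rcases hx.between hyz with ⟨h1, h2⟩ | ⟨h1, h2⟩ <;>
      rintro (⟨h3, h4⟩ | ⟨h3, h4⟩) <;> order
  rw [fareyMutEl, if_neg hy, fsum, hx.1, hx.2]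
  congr 1 <;> ring

def ComplexityDecreases (p q r : QInf) : Prop := complexity (fareyMutEl p q r) < complexity p

theorem IsMediant.complexityDecreases_self_iff (hx : IsMediant x y z)
    (hyz : FareyNbr y z) :
    ComplexityDecreases x y z ↔
      hexNorm (fnum y - fnum z) (fden y - fden z) <
        hexNorm (fnum y + fnum z) (fden y + fden z) := by
  have hdet : (fnum y - fnum z) * fden z - fnum z * (fden y - fden z) = fdet y z := by
    unfold fdet; ring
  have hcop := isCoprime_of_isUnit_mul_sub_mul (hdet ▸ hyz.isUnit_fdet)
  rw [ComplexityDecreases, hx.fareyMutEl_self hyz, complexity_fmk hcop, complexity_eq_hexNorm,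
    hx.1, hx.2]

theorem IsMediant.complexityDecreases_left_iff (hx : IsMediant x y z)
    (hyz : FareyNbr y z) :
    ComplexityDecreases y x z ↔
      hexNorm (fnum y + 2 * fnum z) (fden y + 2 * fden z) < hexNorm (fnum y) (fden y) := by
  have hdet : (fnum y + 2 * fnum z) * fden z - fnum z * (fden y + 2 * fden z) = fdet y z := by
    unfold fdet; ring
  have hcop := isCoprime_of_isUnit_mul_sub_mul (hdet ▸ hyz.isUnit_fdet)
  rw [ComplexityDecreases, hx.fareyMutEl_left hyz, complexity_fmk hcop, complexity_eq_hexNorm]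

theorem IsMediant.not_base (hx : IsMediant x y z)
    (hne : ({x, y, z} : Set QInf) ≠ {1, 0, ⊤}) :
    ¬(fnum y = 1 ∧ fden y = 0 ∧ fnum z = 0 ∧ fden z = 1) := by
  rintro ⟨hny, hdy, hnz, hdz⟩
  obtain rfl : y = ⊤ := eq_top_of_fden_eq_zero hdy
  obtain rfl : z = 0 := QInf.ext hnz hdz
  obtain rfl : x = 1 := QInf.ext (by rw [hx.1, hny, hnz]; rfl) (by rw [hx.2, hdy, hdz]; rfl)
  exact hne (by rw [Set.pair_comm (⊤ : QInf) 0])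

theorem IsMediant.exactlyOne_complexityDecreases (hx : IsMediant x y z)
    (hyz : FareyNbr y z) (hne : ({x, y, z} : Set QInf) ≠ {1, 0, ⊤}) :
    ExactlyOne (ComplexityDecreases x y z) (ComplexityDecreases y x z)
      (ComplexityDecreases z x y) := by
  rw [hx.complexityDecreases_self_iff hyz, hx.complexityDecreases_left_iff hyz,
    hx.symm.complexityDecreases_left_iff hyz.symm]
  exact exactlyOne_hexNorm_mutation_decreases (fden_nonneg y) (fden_nonneg z)
    fnum_eq_one_of_fden_eq_zero fnum_eq_one_of_fden_eq_zero hyz.isUnit_fdet (hx.not_base hne)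
    (hx.symm.not_base (by rwa [Set.pair_comm z y]))

end Mediant

theorem fareyTriple_unique_decreasing_mutation_general (p q r : QInf)
    (h1 : FareyNbr p q) (h2 : FareyNbr p r) (h3 : FareyNbr q r)
    (hne : ({p, q, r} : Set QInf) ≠ {1, 0, ⊤}) :
    ((complexity (fareyMutEl p q r) + complexity q + complexity r <
        complexity p + complexity q + complexity r) ∧
      ¬(complexity (fareyMutEl q p r) + complexity p + complexity r <
        complexity p + complexity q + complexity r) ∧
      ¬(complexity (fareyMutEl r p q) + complexity p + complexity q <
        complexity p + complexity q + complexity r)) ∨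
    (¬(complexity (fareyMutEl p q r) + complexity q + complexity r <
        complexity p + complexity q + complexity r) ∧
      (complexity (fareyMutEl q p r) + complexity p + complexity r <
        complexity p + complexity q + complexity r) ∧
      ¬(complexity (fareyMutEl r p q) + complexity p + complexity q <
        complexity p + complexity q + complexity r)) ∨
    (¬(complexity (fareyMutEl p q r) + complexity q + complexity r <
        complexity p + complexity q + complexity r) ∧
      ¬(complexity (fareyMutEl q p r) + complexity p + complexity r <
        complexity p + complexity q + complexity r) ∧
      (complexity (fareyMutEl r p q) + complexity p + complexity q <
        complexity p + complexity q + complexity r)) := by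
  rcases isMediant_cases h1 h2 h3 with hp | hq | hr
  · have := hp.exactlyOne_complexityDecreases h3 hne
    simp only [ExactlyOne, ComplexityDecreases] at this
    omega
  · have := hq.exactlyOne_complexityDecreases h2 (by rwa [Set.insert_comm q p])
    simp only [ExactlyOne, ComplexityDecreases, fareyMutEl_comm r q p] at this
    omega
  · have := hr.exactlyOne_complexityDecreases h1 (by rwa [Set.insert_comm r p, Set.pair_comm r q])
    simp only [ExactlyOne, ComplexityDecreases, fareyMutEl_comm p r q, fareyMutEl_comm q r p]
      at this
    omega

/-- Every Farey triple `{p, q, r}` different from `{1, 0, ∞}` can be mutated in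
exactly one direction so that the sum of complexities strictly decreases. -/
theorem fareyTriple_unique_decreasing_mutation (p q r : QInf)
    (hpq : p ≠ q) (hpr : p ≠ r) (hqr : q ≠ r)
    (h1 : FareyNbr p q) (h2 : FareyNbr p r) (h3 : FareyNbr q r)
    (hne : ({p, q, r} : Set QInf) ≠ {1, 0, ⊤}) :
    ((complexity (fareyMutEl p q r) + complexity q + complexity r <
        complexity p + complexity q + complexity r) ∧
      ¬(complexity (fareyMutEl q p r) + complexity p + complexity r <
        complexity p + complexity q + complexity r) ∧
      ¬(complexity (fareyMutEl r p q) + complexity p + complexity q <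
        complexity p + complexity q + complexity r)) ∨
    (¬(complexity (fareyMutEl p q r) + complexity q + complexity r <
        complexity p + complexity q + complexity r) ∧
      (complexity (fareyMutEl q p r) + complexity p + complexity r <
        complexity p + complexity q + complexity r) ∧
      ¬(complexity (fareyMutEl r p q) + complexity p + complexity q <
        complexity p + complexity q + complexity r)) ∨
    (¬(complexity (fareyMutEl p q r) + complexity q + complexity r <
        complexity p + complexity q + complexity r) ∧
      ¬(complexity (fareyMutEl q p r) + complexity p + complexity r <
        complexity p + complexity q + complexity r) ∧
      (complexity (fareyMutEl r p q) + complexity p + complexity q <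
        complexity p + complexity q + complexity r)) :=
  fareyTriple_unique_decreasing_mutation_general p q r h1 h2 h3 hne
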